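/- Linear convergence of single-step projected gradient consensus: under the hypotheses of the staying-in-neighborhood lemma with d_k ≡ 0 (i.e., x_{i,k+1} = P_M((1−γ)x_{i,k} + γ∑_j W_{ij}x_{j,k})), the consensus error contracts linearly: ‖x_{k+1} − x̄_{k+1}‖ ≤ ρ₁ ‖x_k − x̄_k‖ for all k ≥ 0, where ρ₁ = (R − Rγ(1−σ₂))/(R − δ) and ρ₁ < 1 since δ < Rγ(1−σ₂). -/

import Mathlib

/-!
Let `d = infDist · M`. If `P` is the nearest-point map of `M` on `{d < R}`, then `d` grows at unit
speed along each normal ray `P u + t • (u - P u) / d u`, `t < R`: follow an Euler scheme for the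
gradient flow of `d`, whose steps gain almost their full length because `P` is uniformly
continuous on the compact tubes `{d ≤ T}`, and compare its endpoint with the point of the ray.
Testing the ray against `p ∈ M` gives Federer's inequality
`2R ⟪u - P u, p - P u⟫ ≤ d u * ‖p - P u‖²`, and applying it at `u` and `v` gives
`‖P u - P v‖ (2R - d u - d v) ≤ 2R ‖u - v‖`.

For one consensus step let `x̂` be the Euclidean mean and `x̄ = P x̂`. Mixing contracts the
deviation from `x̂` by `1 - γ(1 - σ₂)`, the projection costs the factor above with
`d yᵢ ≤ ‖yᵢ - x̂‖ + d x̂`, and since `x̂` is the best constant approximation in the Frobenius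
norm, the new consensus error is at most the distance of the new iterate to the old `x̄`.
-/

open scoped BigOperators

/-- Frobenius norm of a stacked family of vectors. -/
noncomputable def stackNorm {n N : ℕ} (z : Fin n → EuclideanSpace ℝ (Fin N)) : ℝ :=
  Real.sqrt (∑ i, ‖z i‖ ^ 2)

open Metric Filter Topology
open scoped RealInnerProductSpace

section NearestPoint
variable {E : Type*} [MetricSpace E] {M : Set E} {R : ℝ} {P : E → E}

/-- `M` is `R`-proximally smooth with metric projection `P`. -/
def IsNearestPointMap (M : Set E) (R : ℝ) (P : E → E) : Prop :=
  ∀ z, infDist z M < R →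
    P z ∈ M ∧ dist (P z) z = infDist z M ∧ ∀ y ∈ M, dist y z = infDist z M → y = P z

lemma IsNearestPointMap.mem (hP : IsNearestPointMap M R P) {z : E} (hz : infDist z M < R) :
    P z ∈ M :=
  (hP z hz).1

lemma IsNearestPointMap.dist_eq (hP : IsNearestPointMap M R P) {z : E} (hz : infDist z M < R) :
    dist (P z) z = infDist z M :=
  (hP z hz).2.1

lemma IsNearestPointMap.eq_of_dist_eq (hP : IsNearestPointMap M R P) {z y : E}
    (hz : infDist z M < R) (hy : y ∈ M) (hyz : dist y z = infDist z M) : y = P z :=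
  (hP z hz).2.2 y hy hyz

lemma IsNearestPointMap.apply_eq_self (hP : IsNearestPointMap M R P) (hR : 0 < R) {p : E}
    (hp : p ∈ M) : P p = p := by
  have h0 : infDist p M = 0 := infDist_zero_of_mem hp
  exact (hP.eq_of_dist_eq (h0 ▸ hR) hp (by rw [dist_self, h0])).symm

lemma IsNearestPointMap.continuousOn (hP : IsNearestPointMap M R P) (hM : IsCompact M) :
    ContinuousOn P {z | infDist z M < R} := by
  intro z hz
  refine hM.tendsto_nhds_of_unique_mapClusterPt
    (eventually_nhdsWithin_of_forall fun w hw => hP.mem hw) fun q hq hcl => ?_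
  refine hP.eq_of_dist_eq hz hq (le_antisymm ?_ (dist_comm q z ▸ infDist_le_dist_of_mem hq))
  refine le_of_forall_pos_le_add fun ε hε => ?_
  have hlim : Tendsto (fun w => infDist w M + dist w z) (𝓝 z) (𝓝 (infDist z M)) :=
    ((continuous_infDist_pt M).add (continuous_id.dist continuous_const)).tendsto' z _ (by simp)
  refine (isClosed_le (continuous_id.dist continuous_const) continuous_const).mem_of_mapClusterPt
    hcl ?_
  filter_upwards [self_mem_nhdsWithin,
    nhdsWithin_le_nhds (hlim.eventually (ge_mem_nhds (lt_add_of_pos_right _ hε)))] with w hw hw'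
  calc dist (P w) z ≤ dist (P w) w + dist w z := dist_triangle _ _ _
    _ = infDist w M + dist w z := by rw [hP.dist_eq hw]
    _ ≤ infDist z M + ε := hw'

lemma isCompact_setOf_infDist_le [ProperSpace E] (hM : IsCompact M) (hne : M.Nonempty) (ρ : ℝ) :
    IsCompact {z : E | infDist z M ≤ ρ} := by
  refine (hM.cthickening (r := ρ)).of_isClosed_subset
    (isClosed_le (continuous_infDist_pt M) continuous_const) fun z hz => ?_
  obtain ⟨y, hy, hzy⟩ := hM.exists_infDist_eq_dist hne z
  exact mem_cthickening_of_dist_le z y ρ M hy (hzy ▸ hz)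

end NearestPoint

section NormalStep
variable {E : Type*} [NormedAddCommGroup E] {M : Set E} {R : ℝ} {P : E → E}

lemma IsNearestPointMap.norm_sub_eq (hP : IsNearestPointMap M R P) {z : E}
    (hz : infDist z M < R) : ‖z - P z‖ = infDist z M := by
  rw [← dist_eq_norm, dist_comm, hP.dist_eq hz]

variable [NormedSpace ℝ E]

/-- An explicit Euler step of length `η` for the gradient flow of `infDist · M`, whose gradient at
`w ∉ M` is `(w - P w) / infDist w M`. -/
noncomputable def normalStep (M : Set E) (P : E → E) (η : ℝ) (w : E) : E :=
  w + (η / infDist w M) • (w - P w)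

lemma IsNearestPointMap.norm_normalStep_sub (hP : IsNearestPointMap M R P) {w : E} {η : ℝ}
    (hw : 0 < infDist w M) (hwR : infDist w M < R) (hη : 0 ≤ η) :
    ‖normalStep M P η w - w‖ = η := by
  rw [normalStep, add_sub_cancel_left, norm_smul, hP.norm_sub_eq hwR,
    Real.norm_of_nonneg (div_nonneg hη hw.le), div_mul_cancel₀ _ hw.ne']

end NormalStep

section Reach
variable {E : Type*} [NormedAddCommGroup E] [InnerProductSpace ℝ E]
  {M : Set E} {R : ℝ} {P : E → E}

lemma le_norm_add_smul_sub_sub_sq {a b w : E} {t : ℝ} (ht : 0 ≤ t)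
    (hab : ‖w - a‖ ≤ ‖w - b‖) :
    (1 + t) ^ 2 * ‖w - a‖ ^ 2 - t * ‖a - b‖ ^ 2 ≤ ‖w + t • (w - a) - b‖ ^ 2 := by
  have hsq : ‖w - a‖ ^ 2 ≤ ‖(w - a) + (a - b)‖ ^ 2 := by
    rw [sub_add_sub_cancel]; gcongr
  have hstep : w + t • (w - a) - b = (1 + t) • (w - a) + (a - b) := by module
  rw [hstep, norm_add_sq_real, norm_smul, real_inner_smul_left, Real.norm_of_nonneg (by linarith)]
  rw [norm_add_sq_real] at hsq
  nlinarith [norm_nonneg (a - b)]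

lemma norm_sub_ray_sq_le {a x z : E} {d T e : ℝ} (hxa : ‖x - a‖ = d) (hd : 0 < d)
    (hT : d ≤ T) (hzx : ‖z - x‖ ≤ T - d) (hza : T - e ≤ ‖z - a‖) (heT : e ≤ T) :
    ‖z - (a + (T / d) • (x - a))‖ ^ 2 ≤ 2 * T * (T - d) * e / d := by
  have hza' : ‖z - a‖ ^ 2 = ‖z - x‖ ^ 2 + 2 * ⟪z - x, x - a⟫ + d ^ 2 := by
    rw [← hxa, ← norm_add_sq_real, sub_add_sub_cancel]
  have hzr : ‖z - (a + (T / d) • (x - a))‖ ^ 2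
      = ‖z - x‖ ^ 2 - 2 * ((T - d) / d) * ⟪z - x, x - a⟫ + (T - d) ^ 2 := by
    have h : z - (a + (T / d) • (x - a)) = (z - x) - ((T - d) / d) • (x - a) := by
      rw [sub_div, div_self hd.ne', sub_smul, one_smul]; abel
    rw [h, norm_sub_sq_real, real_inner_smul_right, norm_smul, hxa,
      Real.norm_of_nonneg (div_nonneg (by linarith) hd.le), div_mul_cancel₀ _ hd.ne']
    ring
  have hq : ‖z - x‖ ^ 2 ≤ (T - d) ^ 2 := by gcongr
  have hp : (T - e) ^ 2 ≤ ‖z - a‖ ^ 2 := by gcongr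
  rw [le_div_iff₀ hd, hzr]
  have hinner : 2 * ⟪z - x, x - a⟫ = ‖z - a‖ ^ 2 - ‖z - x‖ ^ 2 - d ^ 2 := by linarith
  have hexpand : (‖z - x‖ ^ 2 - 2 * ((T - d) / d) * ⟪z - x, x - a⟫ + (T - d) ^ 2) * d
      = T * ‖z - x‖ ^ 2 - (T - d) * ‖z - a‖ ^ 2 + (T - d) * d * T := by
    rw [mul_assoc 2, mul_comm ((T - d) / d), ← mul_assoc, hinner]; field_simp; ring
  rw [hexpand]
  nlinarith [mul_le_mul_of_nonneg_left hp (by linarith : (0:ℝ) ≤ T - d), sq_nonneg e]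

lemma IsNearestPointMap.add_mul_le_infDist_normalStep (hP : IsNearestPointMap M R P) {w : E}
    {d η ε : ℝ} (hd : 0 < d) (hdw : d ≤ infDist w M) (hη : 0 ≤ η)
    (hwR : infDist w M + η < R) (hεd : ε ≤ d) (hε : ‖P w - P (normalStep M P η w)‖ ≤ ε) :
    infDist w M + η * (1 - (ε / d) ^ 2) ≤ infDist (normalStep M P η w) M := by
  set s := infDist w M
  set w' := normalStep M P η w
  have hs : 0 < s := hd.trans_le hdw
  have hw'R : infDist w' M < R := by
    have := infDist_le_infDist_add_dist (x := w') (y := w) (s := M)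
    rw [dist_eq_norm, hP.norm_normalStep_sub hs (by linarith) hη] at this
    linarith
  have hfar : ‖w - P w‖ ≤ ‖w - P w'‖ := by
    rw [hP.norm_sub_eq (by linarith), ← dist_eq_norm]
    exact infDist_le_dist_of_mem (hP.mem hw'R)
  have hmove := le_norm_add_smul_sub_sub_sq (div_nonneg hη hs.le) hfar
  rw [hP.norm_sub_eq (by linarith), show w + (η / s) • (w - P w) - P w' = w' - P w' from rfl,
    hP.norm_sub_eq hw'R] at hmove
  have hε0 : 0 ≤ ε := (norm_nonneg _).trans hε
  have hlam : (ε / d) ^ 2 ≤ 1 := by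
    rw [div_pow, div_le_one (by positivity)]; gcongr
  have hfull : (1 + η / s) ^ 2 * s ^ 2 = (s + η) ^ 2 := by field_simp
  have hεsq : η / s * ‖P w - P w'‖ ^ 2 ≤ η / s * ε ^ 2 := by gcongr
  have hlow : (s + η * (1 - (ε / d) ^ 2)) ^ 2 ≤ infDist w' M ^ 2 := by
    have hloss : η / s * ε ^ 2 ≤ η * (ε / d) ^ 2 * s := by
      rw [div_pow, div_mul_eq_mul_div, mul_div_assoc', div_mul_eq_mul_div,
        div_le_div_iff₀ hs (by positivity)]
      nlinarith [mul_le_mul_of_nonneg_left (pow_le_pow_left₀ hd.le hdw 2)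
        (mul_nonneg hη (sq_nonneg ε))]
    nlinarith [mul_nonneg hη (sub_nonneg.2 hlam), mul_nonneg hη (sq_nonneg (ε / d))]
  exact (pow_le_pow_iff_left₀ (by nlinarith) infDist_nonneg two_ne_zero).1 hlow

lemma IsNearestPointMap.normalStep_iterate_bounds (hP : IsNearestPointMap M R P) {x : E}
    {d η ε T : ℝ} {K : ℕ} (hd : 0 < d) (hx : infDist x M = d) (hη : 0 ≤ η)
    (hε : 0 ≤ ε) (hεd : ε ≤ d) (hK : d + K * η = T) (hTR : T < R)
    (hmod : ∀ u v, infDist u M ≤ T → infDist v M ≤ T → dist u v ≤ η →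
      ‖P u - P v‖ ≤ ε) :
    ∀ j ≤ K, ‖(normalStep M P η)^[j] x - x‖ ≤ j * η ∧
      d + j * η * (1 - (ε / d) ^ 2) ≤ infDist ((normalStep M P η)^[j] x) M := by
  have hlam : 0 ≤ 1 - (ε / d) ^ 2 := by
    rw [sub_nonneg, div_pow, div_le_one (by positivity)]; gcongr
  intro j
  induction j with
  | zero => intro _; simp [hx]
  | succ j ih =>
    intro hj
    obtain ⟨hdist, hlow⟩ := ih (Nat.le_of_succ_le hj)
    set w := (normalStep M P η)^[j] x
    have hjK : ((j : ℝ) + 1) * η ≤ K * η := by gcongr; exact_mod_cast hj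
    have hup : infDist w M ≤ d + j * η := by
      have := infDist_le_infDist_add_dist (x := w) (y := x) (s := M)
      rw [hx, dist_eq_norm] at this
      linarith
    have hdw : d ≤ infDist w M := by
      nlinarith [mul_nonneg (mul_nonneg (Nat.cast_nonneg j) hη) hlam]
    have hstep := hP.norm_normalStep_sub (hd.trans_le hdw) (by linarith) hη
    have hup' : infDist (normalStep M P η w) M ≤ T := by
      have := infDist_le_infDist_add_dist (x := normalStep M P η w) (y := w) (s := M)
      rw [dist_eq_norm, hstep] at this
      linarith
    have hgain := hP.add_mul_le_infDist_normalStep hd hdw hη (by linarith) hεd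
      (hmod _ _ (by linarith) hup' (by rw [dist_comm, dist_eq_norm, hstep]))
    rw [Function.iterate_succ_apply']
    push_cast
    constructor
    · calc ‖normalStep M P η w - x‖ ≤ ‖normalStep M P η w - w‖ + ‖w - x‖ :=
            norm_sub_le_norm_sub_add_norm_sub _ _ _
        _ ≤ (j + 1) * η := by rw [hstep]; linarith
    · linarith

lemma IsNearestPointMap.exists_near_le_infDist [ProperSpace E] (hP : IsNearestPointMap M R P)
    (hM : IsCompact M) {x : E} (hx : 0 < infDist x M) {T ε : ℝ} (hT : infDist x M ≤ T)
    (hTR : T < R) (hε : 0 < ε) (hεd : ε ≤ infDist x M) :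
    ∃ z, ‖z - x‖ ≤ T - infDist x M ∧
      T - (T - infDist x M) * (ε / infDist x M) ^ 2 ≤ infDist z M := by
  set d := infDist x M
  have hne : M.Nonempty := Set.nonempty_iff_ne_empty.2 fun h => by simp [d, h] at hx
  have hUC := (isCompact_setOf_infDist_le hM hne T).uniformContinuousOn_of_continuous
    (hP.continuousOn hM |>.mono fun z (hz : infDist z M ≤ T) => hz.trans_lt hTR)
  obtain ⟨η₀, hη₀, hmod⟩ := Metric.uniformContinuousOn_iff.1 hUC ε hε
  obtain ⟨K, hK⟩ := exists_nat_gt ((T - d) / η₀)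
  have hK0 : (0 : ℝ) < K := lt_of_le_of_lt (div_nonneg (by linarith) hη₀.le) hK
  have hKη : d + K * ((T - d) / K) = T := by field_simp; ring
  have hη : (T - d) / K < η₀ := by rwa [div_lt_iff₀ hK0, mul_comm, ← div_lt_iff₀ hη₀]
  obtain ⟨hnear, hfar⟩ := hP.normalStep_iterate_bounds hx rfl (div_nonneg (by linarith) hK0.le)
    hε.le hεd hKη hTR (fun u v hu hv huv => by
      rw [← dist_eq_norm]; exact (hmod u hu v hv (huv.trans_lt hη)).le) K le_rfl
  rw [mul_div_cancel₀ _ hK0.ne'] at hnear hfar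
  exact ⟨_, hnear, by linarith⟩

lemma IsNearestPointMap.le_infDist_ray [ProperSpace E] (hP : IsNearestPointMap M R P)
    (hM : IsCompact M) {x : E} (hx : 0 < infDist x M) {T : ℝ} (hT : infDist x M ≤ T)
    (hTR : T < R) : T ≤ infDist (P x + (T / infDist x M) • (x - P x)) M := by
  set d := infDist x M
  set xT := P x + (T / d) • (x - P x)
  have hxR : d < R := hT.trans_lt hTR
  set c := Real.sqrt (2 * T * (T - d) ^ 2 / d ^ 3)
  have hbound : ∀ ε ∈ Set.Ioc 0 d, T - infDist xT M ≤ (T - d) * (ε / d) ^ 2 + c * ε := by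
    rintro ε ⟨hε, hεd⟩
    obtain ⟨z, hzx, hzM⟩ := hP.exists_near_le_infDist hM hx hT hTR hε hεd
    have hza : T - (T - d) * (ε / d) ^ 2 ≤ ‖z - P x‖ :=
      hzM.trans (dist_eq_norm z (P x) ▸ infDist_le_dist_of_mem (hP.mem hxR))
    have hlam : (ε / d) ^ 2 ≤ 1 := by
      rw [div_pow, div_le_one (by positivity)]; gcongr
    have hsq := norm_sub_ray_sq_le (hP.norm_sub_eq hxR) hx hT hzx hza
      (by nlinarith [mul_le_mul_of_nonneg_left hlam (sub_nonneg.2 hT)])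
    have hzT : ‖z - xT‖ ≤ c * ε := by
      rw [← Real.sqrt_sq (norm_nonneg _), ← Real.sqrt_sq hε.le,
        ← Real.sqrt_mul' _ (sq_nonneg ε)]
      refine Real.sqrt_le_sqrt (hsq.trans_eq ?_)
      simp only [d]
      field_simp
    have := infDist_le_infDist_add_dist (x := z) (y := xT) (s := M)
    rw [dist_eq_norm] at this
    linarith
  have hlim : Tendsto (fun ε => (T - d) * (ε / d) ^ 2 + c * ε) (𝓝[>] 0) (𝓝 0) :=
    tendsto_nhdsWithin_of_tendsto_nhds (Continuous.tendsto' (by fun_prop) 0 0 (by simp))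
  have := ge_of_tendsto hlim (eventually_of_mem (Ioc_mem_nhdsGT hx) hbound)
  linarith

lemma IsNearestPointMap.two_mul_inner_le [ProperSpace E] (hP : IsNearestPointMap M R P)
    (hM : IsCompact M) {u p : E} (hu : infDist u M < R) (hp : p ∈ M) :
    2 * R * ⟪u - P u, p - P u⟫ ≤ infDist u M * ‖p - P u‖ ^ 2 := by
  rcases (infDist_nonneg (x := u) (s := M)).eq_or_lt with hd | hd
  · have huM : u ∈ M := (hM.isClosed.mem_iff_infDist_zero ⟨p, hp⟩).2 hd.symm
    rw [hP.apply_eq_self (hd ▸ hu) huM, sub_self, inner_zero_left, ← hd]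
    simp
  set d := infDist u M
  have hray : ∀ T ∈ Set.Ico d R, 2 * T * ⟪u - P u, p - P u⟫ ≤ d * ‖p - P u‖ ^ 2 := by
    rintro T ⟨hdT, hTR⟩
    have hfar : T ≤ ‖-(p - P u) + (T / d) • (u - P u)‖ := by
      have := (hP.le_infDist_ray hM hd hdT hTR).trans (infDist_le_dist_of_mem hp)
      rwa [dist_eq_norm, add_sub_right_comm, ← neg_sub p] at this
    have hexp := norm_add_sq_real (-(p - P u)) ((T / d) • (u - P u))
    rw [norm_smul, hP.norm_sub_eq hu, real_inner_smul_right,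
      Real.norm_of_nonneg (div_nonneg (hd.le.trans hdT) hd.le), div_mul_cancel₀ _ hd.ne',
      real_inner_comm, inner_neg_right, norm_neg] at hexp
    have hT2 : T ^ 2 ≤ ‖-(p - P u) + (T / d) • (u - P u)‖ ^ 2 := by gcongr; linarith
    have hscale : 2 * T * ⟪u - P u, p - P u⟫ = d * (2 * (T / d) * ⟪u - P u, p - P u⟫) := by
      field_simp
    rw [hscale]
    exact mul_le_mul_of_nonneg_left (by linarith) hd.le
  have hlim : Tendsto (fun T => 2 * T * ⟪u - P u, p - P u⟫) (𝓝[<] R)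
      (𝓝 (2 * R * ⟪u - P u, p - P u⟫)) :=
    tendsto_nhdsWithin_of_tendsto_nhds (Continuous.tendsto' (by fun_prop) R _ rfl)
  exact le_of_tendsto hlim (eventually_of_mem (Ico_mem_nhdsLT hu) hray)

lemma IsNearestPointMap.norm_sub_mul_le [ProperSpace E] (hP : IsNearestPointMap M R P)
    (hM : IsCompact M) {u v : E} (hu : infDist u M < R) (hv : infDist v M < R) :
    ‖P u - P v‖ * (2 * R - infDist u M - infDist v M) ≤ 2 * R * ‖u - v‖ := by
  set r := ‖P u - P v‖
  have h1 := hP.two_mul_inner_le hM hu (hP.mem hv)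
  have h2 := hP.two_mul_inner_le hM hv (hP.mem hu)
  have hdecomp :
      r ^ 2 = ⟪u - v, P u - P v⟫ - ⟪u - P u, P u - P v⟫ + ⟪v - P v, P u - P v⟫ := by
    rw [← real_inner_self_eq_norm_sq, ← inner_sub_left, ← inner_add_left]
    congr 1; abel
  have hcs : ⟪u - v, P u - P v⟫ ≤ ‖u - v‖ * r := real_inner_le_norm _ _
  rw [norm_sub_rev (P v), ← neg_sub (P u) (P v), inner_neg_right] at h1
  have hR : 0 ≤ R := infDist_nonneg.trans hu.le
  rcases (norm_nonneg _ : 0 ≤ r).eq_or_lt with hr | hr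
  · rw [show r = 0 from hr.symm, zero_mul]; positivity
  · refine le_of_mul_le_mul_right ?_ hr
    nlinarith

end Reach

section Mean
variable {F : Type*} [NormedAddCommGroup F] [InnerProductSpace ℝ F] {n : ℕ}

noncomputable def mean (v : Fin n → F) : F := (n : ℝ)⁻¹ • ∑ j, v j

lemma sum_sub_mean_eq_zero (hn : 0 < n) (v : Fin n → F) : ∑ i, (v i - mean v) = 0 := by
  rw [Finset.sum_sub_distrib, Finset.sum_const, Finset.card_univ, Fintype.card_fin, mean,
    ← Nat.cast_smul_eq_nsmul ℝ, smul_smul, mul_inv_cancel₀ (by positivity), one_smul,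
    sub_self]

lemma sum_norm_sub_sq_eq (hn : 0 < n) (v : Fin n → F) (c : F) :
    ∑ i, ‖v i - c‖ ^ 2 = ∑ i, ‖v i - mean v‖ ^ 2 + n * ‖mean v - c‖ ^ 2 := by
  have hcross : ∑ i, ⟪v i - mean v, mean v - c⟫ = 0 := by
    rw [← sum_inner, sum_sub_mean_eq_zero hn, inner_zero_left]
  simp_rw [← sub_add_sub_cancel (v _) (mean v) c, norm_add_sq_real]
  rw [Finset.sum_add_distrib, Finset.sum_add_distrib, ← Finset.mul_sum, hcross, Finset.sum_const,
    Finset.card_univ, Fintype.card_fin, nsmul_eq_mul]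
  ring

end Mean

section Stack
variable {n N : ℕ}

lemma stackNorm_eq_norm_toLp (z : Fin n → EuclideanSpace ℝ (Fin N)) :
    stackNorm z = ‖WithLp.toLp 2 z‖ := by
  rw [PiLp.norm_eq_of_L2]; rfl

lemma stackNorm_nonneg (z : Fin n → EuclideanSpace ℝ (Fin N)) : 0 ≤ stackNorm z :=
  Real.sqrt_nonneg _

lemma stackNorm_sq (z : Fin n → EuclideanSpace ℝ (Fin N)) :
    stackNorm z ^ 2 = ∑ i, ‖z i‖ ^ 2 :=
  Real.sq_sqrt (Finset.sum_nonneg fun _ _ => sq_nonneg _)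

lemma norm_le_stackNorm (z : Fin n → EuclideanSpace ℝ (Fin N)) (i : Fin n) :
    ‖z i‖ ≤ stackNorm z := by
  rw [stackNorm_eq_norm_toLp]
  exact PiLp.norm_apply_le (WithLp.toLp 2 z) i

lemma stackNorm_le_mul {z w : Fin n → EuclideanSpace ℝ (Fin N)} {c : ℝ} (hc : 0 ≤ c)
    (h : ∀ i, ‖z i‖ ≤ c * ‖w i‖) : stackNorm z ≤ c * stackNorm w := by
  rw [stackNorm, stackNorm, ← Real.sqrt_sq hc, ← Real.sqrt_mul (sq_nonneg c), Finset.mul_sum]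
  refine Real.sqrt_le_sqrt (Finset.sum_le_sum fun i _ => ?_)
  rw [← mul_pow]
  exact pow_le_pow_left₀ (norm_nonneg _) (h i) 2

lemma stackNorm_smul_add_smul_le (a b : ℝ) (f g : Fin n → EuclideanSpace ℝ (Fin N)) :
    stackNorm (fun i => a • f i + b • g i) ≤ |a| * stackNorm f + |b| * stackNorm g := by
  simp only [stackNorm_eq_norm_toLp, ← Real.norm_eq_abs]
  rw [← norm_smul, ← norm_smul]
  exact norm_add_le (a • WithLp.toLp 2 f) (b • WithLp.toLp 2 g)

lemma stackNorm_sub_sq_eq (hn : 0 < n) (v : Fin n → EuclideanSpace ℝ (Fin N))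
    (c : EuclideanSpace ℝ (Fin N)) :
    stackNorm (fun i => v i - c) ^ 2 =
      stackNorm (fun i => v i - mean v) ^ 2 + n * ‖mean v - c‖ ^ 2 := by
  rw [stackNorm_sq, stackNorm_sq, sum_norm_sub_sq_eq hn]

end Stack

/-- Applied with `s` the consensus error, `μ` the deviation from the mean, `ν` the distance of
the mean to `M` and `ρ` the contraction factor of the mixing step. -/
lemma two_mul_div_mul_le_div_mul {n R δ s μ ν ρ : ℝ} (hn : 1 ≤ n) (hμ : 0 ≤ μ)
    (hν : 0 ≤ ν) (hs0 : 0 ≤ s) (hρ0 : 0 ≤ ρ) (hρ1 : ρ ≤ 1) (hs : s ^ 2 = μ ^ 2 + n * ν ^ 2)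
    (hnν : n * ν ^ 2 ≤ μ ^ 2) (hsδ : s ≤ δ) (hδR : δ < R / 4) :
    2 * R / (2 * R - ρ * μ - 2 * ν) * (ρ * μ) ≤ R * ρ / (R - δ) * s := by
  have hμs : μ ≤ s := by nlinarith
  have hνμ : ν ≤ μ := by nlinarith
  have hkey : s * (2 * ν - μ) ≤ 2 * R * (s - μ) := by
    rcases hμ.eq_or_lt with h0 | hpos
    · subst h0
      have : ν = 0 := by nlinarith
      subst this
      nlinarith
    · by_contra! hlt
      have hRn : 2 * μ ≤ R * n := by nlinarith
      have hA := mul_lt_mul_of_pos_right hlt (by positivity : 0 < μ * (s + μ))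
      have hB := mul_le_mul_of_nonneg_left
        (by nlinarith [sq_nonneg (ν - μ)] : μ * (2 * ν - μ) ≤ ν ^ 2)
        (by positivity : 0 ≤ s * (s + μ))
      have hC := mul_le_mul_of_nonneg_left hμs (by positivity : 0 ≤ s * ν ^ 2)
      have hE := mul_le_mul_of_nonneg_right hnν (sq_nonneg ν)
      have hF := mul_le_mul_of_nonneg_left hRn (by positivity : 0 ≤ μ * ν ^ 2)
      have hG : 2 * R * (s - μ) * (μ * (s + μ)) = 2 * R * μ * (n * ν ^ 2) := by
        linear_combination 2 * R * μ * hs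
      have hH : s ^ 2 * ν ^ 2 = (μ ^ 2 + n * ν ^ 2) * ν ^ 2 := by rw [hs]
      nlinarith
  have hρμ : ρ * μ ≤ μ := mul_le_of_le_one_left hμ hρ1
  have hRρ : 0 ≤ R * ρ := mul_nonneg (by linarith) hρ0
  rw [div_mul_eq_mul_div, div_mul_eq_mul_div, div_le_div_iff₀ (by linarith) (by linarith)]
  calc 2 * R * (ρ * μ) * (R - δ) = R * ρ * (2 * μ * (R - δ)) := by ring
    _ ≤ R * ρ * (s * (2 * R - μ - 2 * ν)) :=
      mul_le_mul_of_nonneg_left (by linarith [mul_le_mul_of_nonneg_left hsδ hμ]) hRρ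
    _ ≤ R * ρ * s * (2 * R - ρ * μ - 2 * ν) := by
      rw [← mul_assoc]
      exact mul_le_mul_of_nonneg_left (by linarith) (mul_nonneg hRρ hs0)

section Consensus
variable {n N : ℕ} {M : Set (EuclideanSpace ℝ (Fin N))} {R : ℝ}
  {P : EuclideanSpace ℝ (Fin N) → EuclideanSpace ℝ (Fin N)}

/-- The consensus error `‖x - x̄‖` with `x̄ = P (mean x)`. -/
noncomputable def consensusError (P : EuclideanSpace ℝ (Fin N) → EuclideanSpace ℝ (Fin N))
    (v : Fin n → EuclideanSpace ℝ (Fin N)) : ℝ :=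
  stackNorm fun i => v i - P (mean v)

lemma IsNearestPointMap.consensusError_le (hP : IsNearestPointMap M R P) (hn : 0 < n)
    {v : Fin n → EuclideanSpace ℝ (Fin N)} {c : EuclideanSpace ℝ (Fin N)} (hc : c ∈ M)
    (hvc : stackNorm (fun i => v i - c) < R) :
    consensusError P v ≤ stackNorm fun i => v i - c := by
  have hvar := stackNorm_sub_sq_eq hn v c
  have hmc : ‖mean v - c‖ ≤ stackNorm fun i => v i - c := by
    have hn1 : (1 : ℝ) ≤ n := by exact_mod_cast hn
    refine (pow_le_pow_iff_left₀ (norm_nonneg _) (stackNorm_nonneg _) two_ne_zero).1 ?_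
    nlinarith [sq_nonneg (stackNorm fun i => v i - mean v), sq_nonneg ‖mean v - c‖]
  have hcm : infDist (mean v) M ≤ ‖mean v - c‖ :=
    dist_eq_norm (mean v) c ▸ infDist_le_dist_of_mem hc
  have hmR : infDist (mean v) M < R := (hcm.trans hmc).trans_lt hvc
  refine (pow_le_pow_iff_left₀ (stackNorm_nonneg _) (stackNorm_nonneg _) two_ne_zero).1 ?_
  rw [stackNorm_sub_sq_eq hn, hvar, hP.norm_sub_eq hmR]
  gcongr
  exact infDist_nonneg

lemma stackNorm_mix_sub_mean_le (hn : 0 < n) {W : Matrix (Fin n) (Fin n) ℝ}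
    (hrow : ∀ i, ∑ j, W i j = 1) {σ₂ : ℝ}
    (hσ : ∀ z : Fin n → EuclideanSpace ℝ (Fin N), ∑ i, z i = 0 →
      stackNorm (fun i => ∑ j, W i j • z j) ≤ σ₂ * stackNorm z)
    {γ : ℝ} (hγ0 : 0 ≤ γ) (hγ1 : γ ≤ 1) (x : Fin n → EuclideanSpace ℝ (Fin N)) :
    stackNorm (fun i => (1 - γ) • x i + γ • ∑ j, W i j • x j - mean x) ≤
      (1 - γ * (1 - σ₂)) * stackNorm fun i => x i - mean x := by
  have hdecomp : (fun i => (1 - γ) • x i + γ • ∑ j, W i j • x j - mean x) =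
      fun i => (1 - γ) • (x i - mean x) + γ • ∑ j, W i j • (x j - mean x) := by
    funext i
    simp_rw [smul_sub, Finset.sum_sub_distrib, ← Finset.sum_smul, hrow, one_smul]
    module
  rw [hdecomp]
  refine (stackNorm_smul_add_smul_le _ _ _ _).trans ?_
  rw [abs_of_nonneg (sub_nonneg.2 hγ1), abs_of_nonneg hγ0]
  nlinarith [mul_le_mul_of_nonneg_left (hσ _ (sum_sub_mean_eq_zero hn x)) hγ0]

lemma infDist_mean_le_norm_sub {x : Fin n → EuclideanSpace ℝ (Fin N)} {i : Fin n}
    (hx : x i ∈ M) :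
    infDist (mean x) M ≤ ‖x i - mean x‖ :=
  norm_sub_rev (mean x) (x i) ▸ dist_eq_norm (mean x) (x i) ▸ infDist_le_dist_of_mem hx

lemma card_mul_infDist_mean_sq_le {x : Fin n → EuclideanSpace ℝ (Fin N)}
    (hx : ∀ i, x i ∈ M) :
    n * infDist (mean x) M ^ 2 ≤ (stackNorm fun i => x i - mean x) ^ 2 := by
  have := Finset.sum_le_sum fun i (_ : i ∈ Finset.univ) =>
    pow_le_pow_left₀ infDist_nonneg (infDist_mean_le_norm_sub (hx i)) 2
  rwa [Finset.sum_const, Finset.card_univ, Fintype.card_fin, nsmul_eq_mul, ← stackNorm_sq] at this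

lemma IsNearestPointMap.sq_consensusError_eq (hP : IsNearestPointMap M R P) (hn : 0 < n)
    {x : Fin n → EuclideanSpace ℝ (Fin N)} (hx : infDist (mean x) M < R) :
    consensusError P x ^ 2 =
      (stackNorm fun i => x i - mean x) ^ 2 + n * infDist (mean x) M ^ 2 := by
  rw [consensusError, stackNorm_sub_sq_eq hn, hP.norm_sub_eq hx]

lemma IsNearestPointMap.stackNorm_proj_sub_le (hP : IsNearestPointMap M R P) (hM : IsCompact M)
    (hn : 0 < n) {x y : Fin n → EuclideanSpace ℝ (Fin N)} (hx : ∀ i, x i ∈ M) {ρ δ : ℝ}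
    (hρ0 : 0 ≤ ρ) (hρ1 : ρ ≤ 1) (hδR : δ < R / 4)
    (hy : stackNorm (fun i => y i - mean x) ≤ ρ * stackNorm fun i => x i - mean x)
    (hs : consensusError P x ≤ δ) :
    (∀ i, infDist (y i) M < R) ∧ infDist (mean x) M < R ∧
      stackNorm (fun i => P (y i) - P (mean x)) ≤ R * ρ / (R - δ) * consensusError P x := by
  set m := mean x
  set s := consensusError P x
  set μ := stackNorm fun i => x i - m
  have hs0 : 0 ≤ s := stackNorm_nonneg _
  have hμ0 : 0 ≤ μ := stackNorm_nonneg _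
  have hvar : s ^ 2 = μ ^ 2 + n * ‖m - P m‖ ^ 2 := stackNorm_sub_sq_eq hn x (P m)
  have hμs : μ ≤ s := (pow_le_pow_iff_left₀ hμ0 hs0 two_ne_zero).1 <| by
    nlinarith [mul_nonneg (Nat.cast_nonneg n : (0 : ℝ) ≤ n) (sq_nonneg ‖m - P m‖)]
  have hmR : infDist m M < R :=
    ((infDist_mean_le_norm_sub (hx ⟨0, hn⟩)).trans
      ((norm_le_stackNorm (fun i => x i - m) _).trans hμs)).trans_lt (by linarith)
  set ν := infDist m M
  have hνμ : ν ≤ μ := (pow_le_pow_iff_left₀ infDist_nonneg hμ0 two_ne_zero).1 <| by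
    nlinarith [card_mul_infDist_mean_sq_le hx, (by exact_mod_cast hn : (1 : ℝ) ≤ n)]
  have hyM : ∀ i, infDist (y i) M ≤ ρ * μ + ν := fun i => by
    have := infDist_le_infDist_add_dist (x := y i) (y := m) (s := M)
    rw [dist_eq_norm] at this
    linarith [(norm_le_stackNorm (fun i => y i - m) i).trans hy]
  have hρμ : ρ * μ ≤ μ := mul_le_of_le_one_left hμ0 hρ1
  have hD : 0 < 2 * R - ρ * μ - 2 * ν := by linarith
  have hyR : ∀ i, infDist (y i) M < R := fun i => (hyM i).trans_lt (by linarith)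
  refine ⟨hyR, hmR, ?_⟩
  have hc : 0 ≤ 2 * R / (2 * R - ρ * μ - 2 * ν) := div_nonneg (by linarith) hD.le
  have hlip : ∀ i, ‖P (y i) - P m‖ ≤ 2 * R / (2 * R - ρ * μ - 2 * ν) * ‖y i - m‖ := by
    intro i
    rw [div_mul_eq_mul_div, le_div_iff₀ hD]
    refine le_trans ?_ (hP.norm_sub_mul_le hM (hyR i) hmR)
    exact mul_le_mul_of_nonneg_left (by linarith [hyM i]) (norm_nonneg _)
  calc stackNorm (fun i => P (y i) - P m)
      ≤ 2 * R / (2 * R - ρ * μ - 2 * ν) * (ρ * μ) :=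
        (stackNorm_le_mul hc hlip).trans (mul_le_mul_of_nonneg_left hy hc)
    _ ≤ R * ρ / (R - δ) * s :=
        two_mul_div_mul_le_div_mul (by exact_mod_cast hn) hμ0 infDist_nonneg hs0 hρ0 hρ1
          (hP.sq_consensusError_eq hn hmR) (card_mul_infDist_mean_sq_le hx) hs hδR

lemma IsNearestPointMap.consensusError_proj_le (hP : IsNearestPointMap M R P) (hM : IsCompact M)
    (hn : 0 < n) {x y : Fin n → EuclideanSpace ℝ (Fin N)} (hx : ∀ i, x i ∈ M) {ρ δ : ℝ}
    (hρ0 : 0 ≤ ρ) (hρ1 : ρ ≤ 1) (hδR : δ < R / 4)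
    (hy : stackNorm (fun i => y i - mean x) ≤ ρ * stackNorm fun i => x i - mean x)
    (hs : consensusError P x ≤ δ) :
    (∀ i, P (y i) ∈ M) ∧
      consensusError P (fun i => P (y i)) ≤ R * ρ / (R - δ) * consensusError P x := by
  obtain ⟨hyR, hmR, hbound⟩ := hP.stackNorm_proj_sub_le hM hn hx hρ0 hρ1 hδR hy hs
  refine ⟨fun i => hP.mem (hyR i), (hP.consensusError_le hn (hP.mem hmR) ?_).trans hbound⟩
  have hδ0 : 0 ≤ δ := (stackNorm_nonneg _).trans hs
  have hcoef : R * ρ / (R - δ) ≤ 4 / 3 := by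
    rw [div_le_iff₀ (by linarith)]; nlinarith
  refine hbound.trans_lt ?_
  calc R * ρ / (R - δ) * consensusError P x ≤ 4 / 3 * δ :=
        mul_le_mul hcoef hs (stackNorm_nonneg _) (by norm_num)
    _ < R := by linarith

end Consensus

theorem stmt11_general {n N : ℕ} (hn : 0 < n)
    (M : Set (EuclideanSpace ℝ (Fin N))) (hMcompact : IsCompact M)
    (R : ℝ)
    (P : EuclideanSpace ℝ (Fin N) → EuclideanSpace ℝ (Fin N))
    (hP : ∀ z, Metric.infDist z M < R →
      P z ∈ M ∧ dist (P z) z = Metric.infDist z M ∧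
        ∀ y ∈ M, dist y z = Metric.infDist z M → y = P z)
    (W : Matrix (Fin n) (Fin n) ℝ)
    (hrow : ∀ i, ∑ j, W i j = 1)
    (σ₂ : ℝ) (hσ₂0 : 0 ≤ σ₂) (hσ₂1 : σ₂ < 1)
    (hσ : ∀ z : Fin n → EuclideanSpace ℝ (Fin N), (∑ i, z i = 0) →
      stackNorm (fun i => ∑ j, W i j • z j) ≤ σ₂ * stackNorm z)
    (γ : ℝ) (hγ0 : 0 < γ) (hγ1 : γ ≤ 1)
    (δ : ℝ) (hδ0 : 0 < δ) (hδ : δ < min (R * γ * (1 - σ₂)) (R / 4))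
    (x : ℕ → Fin n → EuclideanSpace ℝ (Fin N))
    (hx0mem : ∀ i, x 0 i ∈ M)
    (hiter : ∀ k i, x (k + 1) i = P ((1 - γ) • x k i + γ • (∑ j, W i j • x k j)))
    (hinit : stackNorm (fun i => x 0 i - P ((n : ℝ)⁻¹ • ∑ j, x 0 j)) ≤ δ) :
    (R - R * γ * (1 - σ₂)) / (R - δ) < 1 ∧
    ∀ k, stackNorm (fun i => x (k + 1) i - P ((n : ℝ)⁻¹ • ∑ j, x (k + 1) j)) ≤
      ((R - R * γ * (1 - σ₂)) / (R - δ)) *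
        stackNorm (fun i => x k i - P ((n : ℝ)⁻¹ • ∑ j, x k j)) := by
  have hδR : δ < R / 4 := hδ.trans_le (min_le_right _ _)
  have hδγ : δ < R * γ * (1 - σ₂) := hδ.trans_le (min_le_left _ _)
  have hmix : 0 ≤ γ * (1 - σ₂) ∧ γ * (1 - σ₂) ≤ 1 :=
    ⟨mul_nonneg hγ0.le (by linarith), by nlinarith⟩
  have hrate : (R - R * γ * (1 - σ₂)) / (R - δ) = R * (1 - γ * (1 - σ₂)) / (R - δ) := by
    ring
  have hrate1 : (R - R * γ * (1 - σ₂)) / (R - δ) < 1 := by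
    rw [div_lt_one (by linarith)]; linarith
  have hstep : ∀ k, (∀ i, x k i ∈ M) → consensusError P (x k) ≤ δ →
      (∀ i, x (k + 1) i ∈ M) ∧ consensusError P (x (k + 1)) ≤
        (R - R * γ * (1 - σ₂)) / (R - δ) * consensusError P (x k) := by
    intro k hmem herr
    rw [hrate, show x (k + 1) = _ from funext (hiter k)]
    exact IsNearestPointMap.consensusError_proj_le hP hMcompact hn hmem (by linarith)
      (by linarith) hδR (stackNorm_mix_sub_mean_le hn hrow hσ hγ0.le hγ1 (x k)) herr
  have hinv : ∀ k, (∀ i, x k i ∈ M) ∧ consensusError P (x k) ≤ δ := by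
    intro k
    induction k with
    | zero => exact ⟨hx0mem, hinit⟩
    | succ k ih =>
      obtain ⟨hmem, herr⟩ := hstep k ih.1 ih.2
      exact ⟨hmem, (herr.trans (mul_le_of_le_one_left (stackNorm_nonneg _) hrate1.le)).trans ih.2⟩
  exact ⟨hrate1, fun k => (hstep k (hinv k).1 (hinv k).2).2⟩

/-- linear convergence of single-step projected gradient consensus:
under the hypotheses of the staying-in-neighborhood lemma with `d_k ≡ 0`, i.e.
`x_{i,k+1} = P((1-γ) x_{i,k} + γ ∑_j W_{ij} x_{j,k})`, the consensus error contracts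
linearly: `‖x_{k+1} - x̄_{k+1}‖ ≤ ρ₁ ‖x_k - x̄_k‖` for all `k ≥ 0`, where
`ρ₁ = (R - Rγ(1-σ₂))/(R - δ) < 1`. -/
theorem stmt11 {n N : ℕ} (hn : 0 < n)
    (M : Set (EuclideanSpace ℝ (Fin N))) (hMcompact : IsCompact M) (hMne : M.Nonempty)
    (R : ℝ) (hR : 0 < R)
    (P : EuclideanSpace ℝ (Fin N) → EuclideanSpace ℝ (Fin N))
    (hP : ∀ z, Metric.infDist z M < R →
      P z ∈ M ∧ dist (P z) z = Metric.infDist z M ∧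
        ∀ y ∈ M, dist y z = Metric.infDist z M → y = P z)
    (W : Matrix (Fin n) (Fin n) ℝ) (hsymm : W.IsSymm) (hnn : ∀ i j, 0 ≤ W i j)
    (hrow : ∀ i, ∑ j, W i j = 1)
    (σ₂ : ℝ) (hσ₂0 : 0 ≤ σ₂) (hσ₂1 : σ₂ < 1)
    (hσ : ∀ z : Fin n → EuclideanSpace ℝ (Fin N), (∑ i, z i = 0) →
      stackNorm (fun i => ∑ j, W i j • z j) ≤ σ₂ * stackNorm z)
    (γ : ℝ) (hγ0 : 0 < γ) (hγ1 : γ ≤ 1)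
    (δ : ℝ) (hδ0 : 0 < δ) (hδ : δ < min (R * γ * (1 - σ₂)) (R / 4))
    (x : ℕ → Fin n → EuclideanSpace ℝ (Fin N))
    (hx0mem : ∀ i, x 0 i ∈ M)
    (hiter : ∀ k i, x (k + 1) i = P ((1 - γ) • x k i + γ • (∑ j, W i j • x k j)))
    (hinit : stackNorm (fun i => x 0 i - P ((n : ℝ)⁻¹ • ∑ j, x 0 j)) ≤ δ) :
    (R - R * γ * (1 - σ₂)) / (R - δ) < 1 ∧
    ∀ k, stackNorm (fun i => x (k + 1) i - P ((n : ℝ)⁻¹ • ∑ j, x (k + 1) j)) ≤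
      ((R - R * γ * (1 - σ₂)) / (R - δ)) *
        stackNorm (fun i => x k i - P ((n : ℝ)⁻¹ • ∑ j, x k j)) :=
  stmt11_general hn M hMcompact R P hP W hrow σ₂ hσ₂0 hσ₂1 hσ γ hγ0 hγ1 δ hδ0 hδ x hx0mem hiter
    hinit
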